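/- arXiv:2510.03672 — 2 statements merged into one kernel-verified Lean document; each statement's English description precedes it below -/
import Mathlib

section
/- For every integer n ≥ 1, S(n) ≥ (τ(n)²/4) · log n, where S(n) := ∑_{i=1}^{τ(n)} (i − 1) · log d_i and 1 = d_1 < d_2 < ⋯ < d_{τ(n)} = n are the positive divisors of n in increasing order. -/
/-!
The sequence `a i = log d_i` is monotone, and pairing each divisor `d` with `n / d` gives
`a (τ + 1 - i) = log n - a i`. Averaging `S` with its reflection gives
`2 S = ∑ᵢ ((τ - 1) log n / 2 + (2i - 1 - τ) (a i - log n / 2))`, where every second summand is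
nonnegative by monotonicity and the two extreme ones (`i = 1`, `i = τ`) add up to `(τ - 1) log n`.
Hence `2 S ≥ (τ - 1)(τ + 2) log n / 2 ≥ τ² log n / 2` once `τ ≥ 2`.
-/

open Finset
open scoped Classical

noncomputable section

/-- Number of positive divisors of `n`. -/
def tau (n : ℕ) : ℕ := n.divisors.card

/-- The positive divisors of `n` in increasing order. -/
def sortedDivisors (n : ℕ) : List ℕ := n.divisors.sort (· ≤ ·)

/-- The `i`-th divisor of `n` (1-based): `dvs n 1 = 1`, ..., `dvs n (tau n) = n`. -/
def dvs (n i : ℕ) : ℕ := (sortedDivisors n).getD (i - 1) 0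

/-- `S(n) = ∑_{i=1}^{τ(n)} (i-1) log d_i`. -/
noncomputable def Sfun (n : ℕ) : ℝ :=
  ∑ i ∈ Finset.Icc 1 (tau n), ((i : ℝ) - 1) * Real.log (dvs n i)

/-- `V(n) = ∏_{1 ≤ i < j ≤ τ(n)} (d_j - d_i)`. -/
noncomputable def Vfun (n : ℕ) : ℝ :=
  ∏ j ∈ Finset.Icc 1 (tau n), ∏ i ∈ Finset.Ico 1 j, ((dvs n j : ℝ) - (dvs n i : ℝ))

/-- `Ω₂(n) = ∑_{p^α ∥ n} α²`. -/
def Omega2 (n : ℕ) : ℕ := ∑ p ∈ n.primeFactors, (n.factorization p) ^ 2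

theorem sum_Icc_one_reflect {M : Type*} [AddCommMonoid M] (f : ℕ → M) (t : ℕ) :
    ∑ i ∈ Icc 1 t, f (t + 1 - i) = ∑ i ∈ Icc 1 t, f i := by
  refine sum_nbij' (fun i ↦ t + 1 - i) (fun i ↦ t + 1 - i) ?_ ?_ ?_ ?_ ?_ <;> intro i hi <;>
    simp only [mem_Icc] at hi ⊢ <;> omega

section Reflection

variable {a : ℕ → ℝ} {t : ℕ} {L : ℝ}

theorem mul_sub_half_nonneg_of_reflect (hmono : MonotoneOn a (Set.Icc 1 t))
    (hrefl : ∀ i ∈ Icc 1 t, a (t + 1 - i) = L - a i) {i : ℕ} (hi : i ∈ Icc 1 t) :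
    0 ≤ (2 * (i : ℝ) - 1 - t) * (a i - L / 2) := by
  have hi' : i ∈ Set.Icc 1 t := mem_Icc.mp hi
  have hj : t + 1 - i ∈ Set.Icc 1 t := by simp only [Set.mem_Icc] at hi' ⊢; omega
  rcases le_total (t + 1) (2 * i) with h | h
  · have : a (t + 1 - i) ≤ a i := hmono hj hi' (by omega)
    have : (t : ℝ) + 1 ≤ 2 * i := by exact_mod_cast h
    nlinarith [hrefl i hi]
  · have : a i ≤ a (t + 1 - i) := hmono hi' hj (by omega)
    have : 2 * (i : ℝ) ≤ t + 1 := by exact_mod_cast h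
    nlinarith [hrefl i hi]

theorem two_mul_sum_eq_of_reflect (hrefl : ∀ i ∈ Icc 1 t, a (t + 1 - i) = L - a i) :
    2 * ∑ i ∈ Icc 1 t, ((i : ℝ) - 1) * a i =
      ∑ i ∈ Icc 1 t, (((t : ℝ) - 1) * L / 2 + (2 * (i : ℝ) - 1 - t) * (a i - L / 2)) := by
  have hreflected : ∑ i ∈ Icc 1 t, ((i : ℝ) - 1) * a i =
      ∑ i ∈ Icc 1 t, ((t : ℝ) - i) * (L - a i) := by
    rw [← sum_Icc_one_reflect]
    refine sum_congr rfl fun i hi ↦ ?_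
    rw [hrefl i hi, Nat.cast_sub (by simp only [mem_Icc] at hi; omega)]
    push_cast
    ring
  rw [two_mul]
  nth_rw 2 [hreflected]
  rw [← sum_add_distrib]
  exact sum_congr rfl fun i _ ↦ by ring

theorem sq_div_four_mul_le_sum_of_reflect (hmono : MonotoneOn a (Set.Icc 1 t))
    (hrefl : ∀ i ∈ Icc 1 t, a (t + 1 - i) = L - a i) (h1 : a 1 = 0) :
    (t : ℝ) ^ 2 / 4 * L ≤ ∑ i ∈ Icc 1 t, ((i : ℝ) - 1) * a i := by
  rcases Nat.lt_or_ge t 2 with ht | ht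
  · interval_cases t
    · simp
    · have : L = 0 := by linarith [hrefl 1 (by simp)]
      simp [this]
  have hat : a t = L := by simpa [h1] using hrefl 1 (mem_Icc.2 ⟨le_rfl, by omega⟩)
  have hL : 0 ≤ L := by
    simpa [h1, hat] using hmono ⟨le_rfl, by omega⟩ ⟨by omega, le_rfl⟩ (by omega : 1 ≤ t)
  have hends : ((t : ℝ) - 1) * L ≤ ∑ i ∈ Icc 1 t, (2 * (i : ℝ) - 1 - t) * (a i - L / 2) :=
    calc ((t : ℝ) - 1) * L = ∑ i ∈ {1, t}, (2 * (i : ℝ) - 1 - t) * (a i - L / 2) := by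
          rw [sum_pair (by omega), h1, hat]; push_cast; ring
      _ ≤ _ := sum_le_sum_of_subset_of_nonneg
          (by simp only [insert_subset_iff, singleton_subset_iff, mem_Icc]; omega)
          fun i hi _ ↦ mul_sub_half_nonneg_of_reflect hmono hrefl hi
  have htwo := two_mul_sum_eq_of_reflect hrefl
  rw [sum_add_distrib, sum_const, Nat.card_Icc, nsmul_eq_mul] at htwo
  push_cast [Nat.add_sub_cancel] at htwo
  have ht' : (2 : ℝ) ≤ t := by exact_mod_cast ht
  nlinarith [mul_nonneg (sub_nonneg.mpr ht') hL]

end Reflection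

theorem length_sortedDivisors (n : ℕ) : (sortedDivisors n).length = tau n := length_sort _

theorem mem_sortedDivisors {n d : ℕ} : d ∈ sortedDivisors n ↔ d ∈ n.divisors := mem_sort _

theorem map_div_sortedDivisors (n : ℕ) :
    (sortedDivisors n).map (n / ·) = (sortedDivisors n).reverse := by
  refine List.SortedGT.eq_reverse_of_mem_iff_of_sortedLT (fun d ↦ ?_) ?_ (sortedLT_sort _)
  · rw [List.mem_map, mem_sortedDivisors, ← Nat.image_div_divisors_eq_divisors, mem_image]
    simp only [mem_sortedDivisors]
  · refine List.sortedGT_iff_pairwise.2 (List.pairwise_map.2 ?_)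
    refine (sortedLT_sort _).pairwise.imp_of_mem fun hd he hde ↦ ?_
    rw [mem_sortedDivisors, Nat.mem_divisors] at hd he
    exact (Nat.div_lt_div_left hd.2 he.1 hd.1).2 hde

theorem dvs_eq_getElem {n i : ℕ} (hi : i ∈ Icc 1 (tau n)) :
    dvs n i =
      (sortedDivisors n)[i - 1]'(by rw [length_sortedDivisors]; simp only [mem_Icc] at hi; omega) :=
  List.getD_eq_getElem _ _ _

theorem dvs_mem_divisors {n i : ℕ} (hi : i ∈ Icc 1 (tau n)) : dvs n i ∈ n.divisors := by
  rw [dvs_eq_getElem hi, ← mem_sortedDivisors]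
  exact List.getElem_mem _

theorem dvs_mul_dvs_reflect {n i : ℕ} (hi : i ∈ Icc 1 (tau n)) :
    dvs n i * dvs n (tau n + 1 - i) = n := by
  have hi' := mem_Icc.1 hi
  have hj : tau n + 1 - i ∈ Icc 1 (tau n) := mem_Icc.2 (by omega)
  have h := List.getElem_of_eq (map_div_sortedDivisors n) (i := i - 1)
    (by rw [List.length_map, length_sortedDivisors]; omega)
  rw [List.getElem_map, List.getElem_reverse] at h
  simp only [length_sortedDivisors, show tau n - 1 - (i - 1) = tau n + 1 - i - 1 by omega] at h
  rw [dvs_eq_getElem hj, ← h, ← dvs_eq_getElem hi]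
  exact Nat.mul_div_cancel' (Nat.dvd_of_mem_divisors (dvs_mem_divisors hi))

theorem dvs_monotoneOn (n : ℕ) : MonotoneOn (dvs n) (Set.Icc 1 (tau n)) := by
  intro i hi j hj hij
  rw [dvs_eq_getElem (mem_Icc.2 hi), dvs_eq_getElem (mem_Icc.2 hj)]
  exact (sortedLT_sort _).strictMono_get.monotone (show (⟨i - 1, _⟩ : Fin _) ≤ ⟨j - 1, _⟩ by
    simp only [Fin.mk_le_mk]; omega)

theorem dvs_one {n : ℕ} (hn : n ≠ 0) : dvs n 1 = 1 := by
  have h1 : 1 ∈ Icc 1 (tau n) := mem_Icc.2 ⟨le_rfl, card_pos.2 (Nat.nonempty_divisors.2 hn)⟩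
  simp only [dvs_eq_getElem h1, Nat.sub_self, sortedDivisors, sorted_zero_eq_min']
  exact le_antisymm (min'_le _ _ (Nat.one_mem_divisors.2 hn))
    (le_min' _ _ _ fun d hd ↦ Nat.pos_of_mem_divisors hd)

theorem S_lower (n : ℕ) (hn : 1 ≤ n) :
    (tau n : ℝ) ^ 2 / 4 * Real.log n ≤ Sfun n := by
  have hpos : ∀ {i}, i ∈ Icc 1 (tau n) → (0 : ℝ) < dvs n i := fun hi ↦
    Nat.cast_pos.2 (Nat.pos_of_mem_divisors (dvs_mem_divisors hi))
  refine sq_div_four_mul_le_sum_of_reflect (a := fun i ↦ Real.log (dvs n i)) ?_ ?_ ?_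
  · intro i hi j hj hij
    exact Real.log_le_log (hpos (mem_Icc.2 hi)) (Nat.cast_le.2 (dvs_monotoneOn n hi hj hij))
  · intro i hi
    have hj : tau n + 1 - i ∈ Icc 1 (tau n) := by simp only [mem_Icc] at hi ⊢; omega
    rw [eq_sub_iff_add_eq, ← Real.log_mul (hpos hj).ne' (hpos hi).ne', ← Nat.cast_mul, mul_comm,
      dvs_mul_dvs_reflect hi]
  · simp [dvs_one (by omega : n ≠ 0)]
end
end

section
/- For every ε > 0 and every integer n ≥ 2 such that every prime power p^α exactly dividing n satisfies log(p^α) ≤ 4ε³ · log n, the number of positive divisors d of n with |log d − (log n)/2| < ε · log n is at least (1 − ε) · τ(n). -/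
open Finset
open scoped Classical

noncomputable section

/-!
If `d` is a uniformly random divisor of `n = ∏ p ^ α_p`, then `log d = ∑ b_p log p` with
independent `b_p` uniform on `{0, …, α_p}`. So `log d` has mean `(log n) / 2` and variance at most
`∑ (log p ^ α_p)² / 4 ≤ ε³ (log n)²` by hypothesis, and Chebyshev's inequality bounds the proportion
of divisors with `|log d - (log n) / 2| ≥ ε log n` by `ε`. Independence appears as additivity of the
variance over coprime factors.
-/

theorem Nat.Coprime.sum_divisors_mul_eq_sum_sum {M : Type*} [AddCommMonoid M] {m n : ℕ}
    (hmn : m.Coprime n) (f : ℕ → M) :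
    ∑ d ∈ (m * n).divisors, f d = ∑ x ∈ m.divisors, ∑ y ∈ n.divisors, f (x * y) := by
  rw [hmn.divisors_mul, sum_map]
  exact (sum_attach _ fun p : ℕ × ℕ => f (p.1 * p.2)).trans (sum_product _ _ _)

theorem Finset.card_filter_le_abs_mul_sq_le_sum_sq {α : Type*} (s : Finset α) (g : α → ℝ)
    {c : ℝ} (hc : 0 ≤ c) :
    (#(s.filter fun x => c ≤ |g x|) : ℝ) * c ^ 2 ≤ ∑ x ∈ s, g x ^ 2 := by
  calc (#(s.filter fun x => c ≤ |g x|) : ℝ) * c ^ 2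
      = ∑ _x ∈ s.filter fun x => c ≤ |g x|, c ^ 2 := by rw [sum_const, nsmul_eq_mul]
    _ ≤ ∑ x ∈ s.filter fun x => c ≤ |g x|, g x ^ 2 :=
        sum_le_sum fun x hx => sq_abs (g x) ▸ pow_le_pow_left₀ hc (mem_filter.mp hx).2 2
    _ ≤ ∑ x ∈ s, g x ^ 2 :=
        sum_le_sum_of_subset_of_nonneg (filter_subset _ _) fun _ _ _ => sq_nonneg _

/- In `count_central_divisors` the filtered variable is elaborated as a real, so `n.divisors` is
coerced to a `Finset ℝ` through the `Finset` monad. -/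
theorem Finset.card_filter_natCast_bind (s : Finset ℕ) (P : ℝ → Prop) [DecidablePred P] :
    #((s >>= fun a => pure (a : ℝ)).filter P) = #(s.filter fun a : ℕ => P a) := by
  have himage : (s >>= fun a => pure (a : ℝ)) = s.image (↑) := by
    simp only [bind_def, pure_def, sup_singleton_apply]
  rw [himage, filter_image, card_image_of_injective _ Nat.cast_injective]

theorem sum_log_divisors_sub_half_eq_zero (n : ℕ) :
    ∑ d ∈ n.divisors, (Real.log d - Real.log n / 2) = 0 := by
  rcases eq_or_ne n 0 with rfl | hn
  · simp
  have hpair : ∀ d ∈ n.divisors, Real.log d + Real.log ((n / d : ℕ) : ℝ) = Real.log n := by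
    intro d hd
    rw [← Real.log_mul (by exact_mod_cast (Nat.pos_of_mem_divisors hd).ne')
      (by exact_mod_cast (Nat.div_pos (Nat.divisor_le hd) (Nat.pos_of_mem_divisors hd)).ne'),
      ← Nat.cast_mul, Nat.mul_div_cancel' (Nat.dvd_of_mem_divisors hd)]
  have hsum : 2 * ∑ d ∈ n.divisors, Real.log d = #n.divisors * Real.log n := by
    calc 2 * ∑ d ∈ n.divisors, Real.log d
        = ∑ d ∈ n.divisors, (Real.log d + Real.log ((n / d : ℕ) : ℝ)) := by
          rw [sum_add_distrib, Nat.sum_div_divisors n fun d => Real.log d]; ring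
      _ = #n.divisors * Real.log n := by rw [sum_congr rfl hpair, sum_const, nsmul_eq_mul]
  rw [sum_sub_distrib, sum_const, nsmul_eq_mul]
  linarith

theorem abs_log_divisor_sub_half_le {n d : ℕ} (hd : d ∈ n.divisors) :
    |Real.log d - Real.log n / 2| ≤ Real.log n / 2 := by
  have hd₁ : (1 : ℝ) ≤ d := by exact_mod_cast Nat.pos_of_mem_divisors hd
  have hdn : (d : ℝ) ≤ n := by
    exact_mod_cast Nat.le_of_dvd (Nat.pos_of_ne_zero (Nat.mem_divisors.mp hd).2)
      (Nat.dvd_of_mem_divisors hd)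
  have := Real.log_nonneg hd₁
  have := Real.log_le_log (by linarith) hdn
  rw [abs_le]
  constructor <;> linarith

/-- `τ(n)` times the variance of `log d` over the divisors `d` of `n`, whose mean is `log n / 2`. -/
noncomputable def logDivisorSqDev (n : ℕ) : ℝ :=
  ∑ d ∈ n.divisors, (Real.log d - Real.log n / 2) ^ 2

theorem logDivisorSqDev_le (n : ℕ) : logDivisorSqDev n ≤ tau n * Real.log n ^ 2 / 4 := by
  calc logDivisorSqDev n ≤ ∑ _d ∈ n.divisors, (Real.log n / 2) ^ 2 :=
        sum_le_sum fun d hd => sq_le_sq' (abs_le.mp (abs_log_divisor_sub_half_le hd)).1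
          (abs_le.mp (abs_log_divisor_sub_half_le hd)).2
    _ = tau n * Real.log n ^ 2 / 4 := by rw [sum_const, nsmul_eq_mul, tau]; ring

theorem logDivisorSqDev_mul {m n : ℕ} (hm : m ≠ 0) (hn : n ≠ 0) (hmn : m.Coprime n) :
    logDivisorSqDev (m * n) = tau n * logDivisorSqDev m + tau m * logDivisorSqDev n := by
  have hlog : ∀ {x y : ℕ}, x ≠ 0 → y ≠ 0 →
      Real.log ((x * y : ℕ) : ℝ) = Real.log x + Real.log y := fun hx hy => by
    push_cast; exact Real.log_mul (by exact_mod_cast hx) (by exact_mod_cast hy)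
  have hexpand : ∀ x ∈ m.divisors, ∀ y ∈ n.divisors,
      (Real.log ((x * y : ℕ) : ℝ) - Real.log ((m * n : ℕ) : ℝ) / 2) ^ 2
        = (Real.log x - Real.log m / 2) ^ 2
          + 2 * (Real.log x - Real.log m / 2) * (Real.log y - Real.log n / 2)
          + (Real.log y - Real.log n / 2) ^ 2 := fun x hx y hy => by
    rw [hlog (Nat.pos_of_mem_divisors hx).ne' (Nat.pos_of_mem_divisors hy).ne', hlog hm hn]
    ring
  -- the cross terms vanish because the deviations of `log y` have mean zero
  have hinner : ∀ x ∈ m.divisors,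
      ∑ y ∈ n.divisors, (Real.log ((x * y : ℕ) : ℝ) - Real.log ((m * n : ℕ) : ℝ) / 2) ^ 2
        = tau n * (Real.log x - Real.log m / 2) ^ 2 + logDivisorSqDev n := fun x hx => by
    rw [sum_congr rfl (hexpand x hx), sum_add_distrib, sum_add_distrib, sum_const, ← mul_sum,
      sum_log_divisors_sub_half_eq_zero, mul_zero, add_zero, nsmul_eq_mul, logDivisorSqDev, tau]
  rw [logDivisorSqDev, hmn.sum_divisors_mul_eq_sum_sum, sum_congr rfl hinner, sum_add_distrib,
    ← mul_sum, sum_const, nsmul_eq_mul]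
  simp only [logDivisorSqDev, tau]

theorem logDivisorSqDev_prod_le {ι : Type*} (s : Finset ι) (a : ι → ℕ) (ha : ∀ i ∈ s, a i ≠ 0)
    (hcop : (s : Set ι).Pairwise fun i j => (a i).Coprime (a j)) :
    logDivisorSqDev (∏ i ∈ s, a i) ≤ tau (∏ i ∈ s, a i) * ∑ i ∈ s, Real.log (a i) ^ 2 / 4 := by
  induction s using Finset.cons_induction with
  | empty => simp [logDivisorSqDev]
  | cons j s hj ih =>
    rw [coe_cons, Set.pairwise_insert] at hcop
    have hj0 : a j ≠ 0 := ha j (mem_cons_self j s)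
    have hs0 : ∏ i ∈ s, a i ≠ 0 := prod_ne_zero_iff.mpr fun i hi => ha i (mem_cons_of_mem hi)
    have hcoprime : (a j).Coprime (∏ i ∈ s, a i) :=
      Nat.Coprime.prod_right fun i hi => (hcop.2 i hi (ne_of_mem_of_not_mem hi hj).symm).1
    have htau : (tau (a j * ∏ i ∈ s, a i) : ℝ) = tau (a j) * tau (∏ i ∈ s, a i) := by
      simp only [tau]; exact_mod_cast hcoprime.card_divisors_mul
    have ih' := ih (fun i hi => ha i (mem_cons_of_mem hi)) hcop.1
    have hj' := logDivisorSqDev_le (a j)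
    rw [prod_cons, sum_cons, logDivisorSqDev_mul hj0 hs0 hcoprime, htau]
    have hτj := Nat.cast_nonneg (α := ℝ) (tau (a j))
    have hτs := Nat.cast_nonneg (α := ℝ) (tau (∏ i ∈ s, a i))
    nlinarith [mul_le_mul_of_nonneg_left ih' hτj, mul_le_mul_of_nonneg_left hj' hτs]

theorem sum_log_primeFactors_pow_factorization {n : ℕ} (hn : n ≠ 0) :
    ∑ p ∈ n.primeFactors, Real.log ((p : ℝ) ^ n.factorization p) = Real.log n := by
  conv_rhs => rw [Nat.prod_primeFactors_pow_factorization hn]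
  rw [Nat.cast_prod, Real.log_prod fun p hp => by
    have := (Nat.prime_of_mem_primeFactors hp).pos; positivity]
  push_cast
  rfl

theorem logDivisorSqDev_le_of_log_pow_factorization_le (n : ℕ) {c : ℝ}
    (h : ∀ p ∈ n.primeFactors, Real.log ((p : ℝ) ^ n.factorization p) ≤ c) :
    logDivisorSqDev n ≤ tau n * (c * Real.log n) / 4 := by
  rcases eq_or_ne n 0 with rfl | hn
  · simp [logDivisorSqDev, tau]
  have hprimePow := logDivisorSqDev_prod_le n.primeFactors (fun p => p ^ n.factorization p)
    (fun p hp => pow_ne_zero _ (Nat.prime_of_mem_primeFactors hp).ne_zero)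
    (fun p hp q hq hpq => Nat.coprime_pow_primes _ _ (Nat.prime_of_mem_primeFactors hp)
      (Nat.prime_of_mem_primeFactors hq) hpq)
  rw [← Nat.prod_primeFactors_pow_factorization hn] at hprimePow
  push_cast at hprimePow
  have hsq : ∑ p ∈ n.primeFactors, Real.log ((p : ℝ) ^ n.factorization p) ^ 2 / 4
      ≤ c * Real.log n / 4 := by
    calc ∑ p ∈ n.primeFactors, Real.log ((p : ℝ) ^ n.factorization p) ^ 2 / 4
        ≤ ∑ p ∈ n.primeFactors, c * Real.log ((p : ℝ) ^ n.factorization p) / 4 := by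
          refine sum_le_sum fun p hp => ?_
          have : 0 ≤ Real.log ((p : ℝ) ^ n.factorization p) :=
            Real.log_nonneg (one_le_pow₀ (by exact_mod_cast (Nat.prime_of_mem_primeFactors hp).pos))
          have := h p hp
          rw [sq]; gcongr
      _ = c * Real.log n / 4 := by
          rw [← sum_div, ← mul_sum, sum_log_primeFactors_pow_factorization hn]
  calc logDivisorSqDev n ≤ tau n * (c * Real.log n / 4) :=
        hprimePow.trans (mul_le_mul_of_nonneg_left hsq (Nat.cast_nonneg _))
    _ = tau n * (c * Real.log n) / 4 := by ring

theorem count_central_divisors (ε : ℝ) (hε : 0 < ε) (n : ℕ) (hn : 2 ≤ n)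
    (h : ∀ p ∈ n.primeFactors, Real.log (p ^ n.factorization p) ≤ 4 * ε ^ 3 * Real.log n) :
    (1 - ε) * (tau n : ℝ)
      ≤ ((n.divisors.filter (fun d => |Real.log d - Real.log n / 2| < ε * Real.log n)).card : ℝ) := by
  set L := Real.log n
  have hL : 0 < L := Real.log_pos (by exact_mod_cast hn)
  have hdev : logDivisorSqDev n ≤ tau n * (ε * L) ^ 2 * ε := by
    have := logDivisorSqDev_le_of_log_pow_factorization_le n h
    linarith
  have hbad : (#(n.divisors.filter fun d : ℕ => ε * L ≤ |Real.log d - L / 2|) : ℝ) ≤ ε * tau n := by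
    have hcheb := (n.divisors.card_filter_le_abs_mul_sq_le_sum_sq
      (fun d => Real.log d - L / 2) (by positivity : 0 ≤ ε * L)).trans hdev
    nlinarith [pow_pos (mul_pos hε hL) 2]
  have hsplit := n.divisors.card_filter_add_card_filter_not
    fun d : ℕ => |Real.log d - L / 2| < ε * L
  simp only [not_lt] at hsplit
  rw [card_filter_natCast_bind]
  have : (tau n : ℝ) = _ := congrArg Nat.cast hsplit.symm
  push_cast at this
  linarith
end
end
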